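/- For every integer k ≥ 2, the polynomial P_k satisfies: P_k((1−k)/2) = 0 and the derivative P_k'((1−k)/2) > 0; and P_k((k−1)/2) = 0 and P_k'((k−1)/2) < 0. (Thus r₀ = (1−k)/2 and r₁ = (k−1)/2 are simple roots of P_k, and (r₀,0), (r₁,0) are crossing points of the piecewise smooth vector field Z_k = ((±1, P_k'(x)) for ±y ≥ 0) with switching manifold {y = 0}.) -/

import Mathlib

/-- The polynomial `P_k(x) = -(x + (k-1)/2)(x - (k-1)/2) ∏_{i=1}^{k-1} (x - (i - k/2))²`. -/
noncomputable def Pk (k : ℕ) (x : ℝ) : ℝ :=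
  -((x + ((k : ℝ) - 1) / 2) * (x - ((k : ℝ) - 1) / 2)) *
    ∏ i ∈ Finset.Icc 1 (k - 1), (x - ((i : ℝ) - (k : ℝ) / 2)) ^ 2

/-!
The double roots `j - k/2` of `P_k` all lie strictly between the two endpoints `±(k-1)/2`, so the
squared product `Q_k(x) = ∏_j (x - (j - k/2))²` is positive at the endpoints. Near an endpoint `a` we may write
`P_k(x) = (x - a) h(x)` with `h` continuous, so `P_k'(a) = h(a)`, which is `±(k-1) Q_k(a)`.
-/

open Filter Topology

theorem hasDerivAt_sub_smul_of_continuousAt {𝕜 F : Type*} [NontriviallyNormedField 𝕜]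
    [NormedAddCommGroup F] [NormedSpace 𝕜 F] {h : 𝕜 → F} {a : 𝕜} (hh : ContinuousAt h a) :
    HasDerivAt (fun x => (x - a) • h x) (h a) a := by
  rw [hasDerivAt_iff_tendsto_slope]
  have hslope : h =ᶠ[𝓝[≠] a] slope (fun x => (x - a) • h x) a := by
    filter_upwards [self_mem_nhdsWithin] with x hx
    rw [slope_def_module, sub_self, zero_smul, sub_zero, smul_smul,
      inv_mul_cancel₀ (sub_ne_zero.mpr hx), one_smul]
  exact (hh.tendsto.mono_left nhdsWithin_le_nhds).congr' hslope

noncomputable def Qk (k : ℕ) (x : ℝ) : ℝ :=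
  ∏ i ∈ Finset.Icc 1 (k - 1), (x - ((i : ℝ) - (k : ℝ) / 2)) ^ 2

@[fun_prop]
theorem continuous_Qk (k : ℕ) : Continuous (Qk k) := by
  unfold Qk
  fun_prop

theorem Qk_pos_of_le_abs {k : ℕ} {x : ℝ} (hx : ((k : ℝ) - 1) / 2 ≤ |x|) : 0 < Qk k x := by
  refine Finset.prod_pos fun i hi => sq_pos_of_ne_zero (sub_ne_zero.mpr ?_)
  obtain ⟨hi1, hik⟩ := Finset.mem_Icc.mp hi
  have hi1' : (1 : ℝ) ≤ i := by exact_mod_cast hi1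
  have hik' : (i : ℝ) + 1 ≤ k := by exact_mod_cast (by omega : i + 1 ≤ k)
  rintro rfl
  have hroot : |(i : ℝ) - k / 2| ≤ ((k : ℝ) - 2) / 2 := abs_le.mpr ⟨by linarith, by linarith⟩
  linarith

theorem Pk_eq_sub_mul_left (k : ℕ) :
    Pk k = fun x => (x - (1 - (k : ℝ)) / 2) * (-(x - ((k : ℝ) - 1) / 2) * Qk k x) := by
  funext x
  rw [Pk, Qk]
  ring

theorem Pk_eq_sub_mul_right (k : ℕ) :
    Pk k = fun x => (x - ((k : ℝ) - 1) / 2) * (-(x + ((k : ℝ) - 1) / 2) * Qk k x) := by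
  funext x
  rw [Pk, Qk]
  ring

theorem hasDerivAt_Pk_left (k : ℕ) :
    HasDerivAt (Pk k) (((k : ℝ) - 1) * Qk k ((1 - k) / 2)) ((1 - k) / 2) := by
  rw [Pk_eq_sub_mul_left]
  exact (hasDerivAt_sub_smul_of_continuousAt (h := fun x => -(x - ((k : ℝ) - 1) / 2) * Qk k x)
    (by fun_prop)).congr_deriv (by ring)

theorem hasDerivAt_Pk_right (k : ℕ) :
    HasDerivAt (Pk k) ((1 - (k : ℝ)) * Qk k ((k - 1) / 2)) ((k - 1) / 2) := by
  rw [Pk_eq_sub_mul_right]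
  exact (hasDerivAt_sub_smul_of_continuousAt (h := fun x => -(x + ((k : ℝ) - 1) / 2) * Qk k x)
    (by fun_prop)).congr_deriv (by ring)

/-- `r₀ = (1-k)/2` and `r₁ = (k-1)/2` are simple roots of `P_k`, with `P_k' > 0` at `r₀`
and `P_k' < 0` at `r₁`; hence `(r₀,0)`, `(r₁,0)` are crossing points of `Z_k`. -/
theorem Pk_simple_roots_at_endpoints (k : ℕ) (hk : 2 ≤ k) :
    Pk k ((1 - (k : ℝ)) / 2) = 0 ∧ 0 < deriv (Pk k) ((1 - (k : ℝ)) / 2) ∧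
    Pk k (((k : ℝ) - 1) / 2) = 0 ∧ deriv (Pk k) (((k : ℝ) - 1) / 2) < 0 := by
  have hk' : (2 : ℝ) ≤ k := by exact_mod_cast hk
  have hQ_left : 0 < Qk k ((1 - k) / 2) :=
    Qk_pos_of_le_abs (by rw [abs_of_nonpos (by linarith)]; linarith)
  have hQ_right : 0 < Qk k ((k - 1) / 2) :=
    Qk_pos_of_le_abs (le_abs_self _)
  refine ⟨by simp [Pk_eq_sub_mul_left], ?_, by simp [Pk_eq_sub_mul_right], ?_⟩
  · rw [(hasDerivAt_Pk_left k).deriv]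
    exact mul_pos (by linarith) hQ_left
  · rw [(hasDerivAt_Pk_right k).deriv]
    exact mul_neg_of_neg_of_pos (by linarith) hQ_right
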